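/- arXiv:1810.09806 — 2 statements merged into one kernel-verified Lean document; each statement's English description precedes it below -/
import Mathlib

section
/- Let s ≥ 1/2, and suppose real frequencies satisfy ξ = ξ₁ - ξ₂ + ξ₃ with |ξ₁| ∼ |ξ₂| ≫ |ξ₃| and |ξ| ≫ |ξ₃| (high-high interaction with one low frequency). Then ⟨Φ(ξ̄)⟩ ∼ ⟨ξ⟩⟨ξ₂⟩ where Φ(ξ̄) = 2(ξ-ξ₁)(ξ-ξ₃), and the multiplier m(ξ̄) = (|ξ₂|/⟨Φ(ξ̄)⟩^{1/2}) ⟨ξ⟩^s / (⟨ξ₁⟩^s⟨ξ₂⟩^s⟨ξ₃⟩^s) satisfies m(ξ̄) ≲ ⟨ξ₂⟩^{-s} ⟨ξ₃⟩^{-s}. Precisely: there exist constants c, C such that if ⟨ξ₁⟩ ≤ c⟨ξ₂⟩ and c⟨ξ₂⟩ ≤ ⟨ξ₁⟩ and ⟨ξ₃⟩ ≤ c⟨ξ⟩ and ⟨ξ₃⟩ ≤ c⟨ξ₂⟩ hold with appropriate smallness, then m(ξ̄) ≤ C ⟨ξ₂⟩^{-s} ⟨ξ₃⟩^{-s}.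 -/
/-- The Japanese bracket `⟨x⟩ = (1+x²)^{1/2}`. -/
noncomputable def jb (x : ℝ) : ℝ := (1 + x ^ 2) ^ ((1 : ℝ) / 2)

lemma jb_nonneg (x : ℝ) : 0 ≤ jb x := by unfold jb; positivity

lemma jb_sq (x : ℝ) : jb x ^ 2 = 1 + x ^ 2 := by
  unfold jb
  rw [← Real.rpow_natCast ((1 + x ^ 2) ^ ((1:ℝ)/2)) 2, ← Real.rpow_mul (by positivity)]
  norm_num

lemma le_on_sq {u v : ℝ} (hu : 0 ≤ u) (hv : 0 ≤ v) (h : u ^ 2 ≤ v ^ 2) : u ≤ v := by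
  nlinarith

lemma one_le_jb (x : ℝ) : 1 ≤ jb x :=
  le_on_sq zero_le_one (jb_nonneg x) (by rw [jb_sq]; nlinarith [sq_nonneg x])

lemma jb_pos (x : ℝ) : 0 < jb x := lt_of_lt_of_le one_pos (one_le_jb x)

lemma abs_le_jb (x : ℝ) : |x| ≤ jb x :=
  le_on_sq (abs_nonneg x) (jb_nonneg x) (by rw [jb_sq, sq_abs]; linarith)

lemma jb_neg (x : ℝ) : jb (-x) = jb x := by unfold jb; ring_nf

lemma jb_mul_jb_ge (x y : ℝ) : 1 + x * y ≤ jb x * jb y := by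
  rcases le_or_gt (1 + x * y) 0 with h | h
  · exact h.trans (mul_nonneg (jb_nonneg x) (jb_nonneg y))
  · apply le_on_sq h.le (mul_nonneg (jb_nonneg x) (jb_nonneg y))
    rw [mul_pow, jb_sq, jb_sq]
    nlinarith [sq_nonneg (x - y)]

lemma jb_triangle (x y : ℝ) : jb (x + y) ≤ jb x + jb y := by
  apply le_on_sq (jb_nonneg _) (by linarith [jb_nonneg x, jb_nonneg y])
  rw [jb_sq]
  nlinarith [jb_mul_jb_ge x y, jb_sq x, jb_sq y]

lemma jb_sub_le (x y : ℝ) : jb (x - y) ≤ jb x + jb y := by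
  have := jb_triangle x (-y)
  rwa [jb_neg, ← sub_eq_add_neg] at this

lemma jb_two_mul_le (a b : ℝ) : jb (2 * a * b) ≤ 3 * jb a * jb b := by
  apply le_on_sq (jb_nonneg _)
    (by nlinarith [jb_nonneg a, jb_nonneg b, mul_nonneg (jb_nonneg a) (jb_nonneg b)])
  rw [mul_pow, mul_pow, jb_sq, jb_sq, jb_sq]
  nlinarith [sq_nonneg (a * b), sq_nonneg a, sq_nonneg b]

lemma half_jb_le_abs {x : ℝ} (h : 2 ≤ jb x) : jb x / 2 ≤ |x| := by
  apply le_on_sq (by linarith) (abs_nonneg x)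
  have := jb_sq x
  nlinarith [sq_abs x]

lemma mult_aux (s m A B1 B2 B3 P : ℝ) (hs : 1/2 ≤ s) (hA : 0 < A) (hB1 : 0 < B1)
    (hB2 : 0 < B2) (hB3 : 0 < B3) (hP : 0 < P)
    (hm : m ≤ B2) (h1 : 1/4 * B2 ≤ B1) (hA6 : A ≤ 6 * B2)
    (hPl : A * B2 / 8 ≤ P) (hPu : P ≤ 12 * (A * B2)) :
    ((12 * (24:ℝ) ^ s)⁻¹ * (A * B2) ≤ P ∧ P ≤ 12 * (24:ℝ) ^ s * (A * B2)) ∧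
      m / P ^ ((1:ℝ)/2) * (A ^ s / (B1 ^ s * B2 ^ s * B3 ^ s)) ≤
        12 * (24:ℝ) ^ s * (B2 ^ (-s) * B3 ^ (-s)) := by
  have h24 : (1:ℝ) ≤ (24:ℝ) ^ s := by
    have := Real.rpow_le_rpow_of_exponent_le (by norm_num : (1:ℝ) ≤ 24) (by linarith : (0:ℝ) ≤ s)
    rwa [Real.rpow_zero] at this
  have hs' : (0:ℝ) ≤ s - 1/2 := by linarith
  have hAh : (0:ℝ) < A ^ ((1:ℝ)/2) := Real.rpow_pos_of_pos hA _
  have hB2h : (0:ℝ) < B2 ^ ((1:ℝ)/2) := Real.rpow_pos_of_pos hB2 _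
  have hB2s : (0:ℝ) < B2 ^ s := Real.rpow_pos_of_pos hB2 _
  have hB1s : (0:ℝ) < B1 ^ s := Real.rpow_pos_of_pos hB1 _
  have hB3s : (0:ℝ) < B3 ^ s := Real.rpow_pos_of_pos hB3 _
  have hPh : (0:ℝ) < P ^ ((1:ℝ)/2) := Real.rpow_pos_of_pos hP _
  refine ⟨⟨?_, ?_⟩, ?_⟩
  · have hCge : (8:ℝ) ≤ 12 * (24:ℝ) ^ s := by linarith
    have hCinv : (12 * (24:ℝ) ^ s)⁻¹ ≤ 1/8 := by
      rw [show (1:ℝ)/8 = (8:ℝ)⁻¹ by norm_num]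
      exact inv_anti₀ (by norm_num) hCge
    calc (12 * (24:ℝ) ^ s)⁻¹ * (A * B2) ≤ (1/8) * (A * B2) :=
          mul_le_mul_of_nonneg_right hCinv (by positivity)
      _ ≤ P := by linarith
  · nlinarith [mul_pos hA hB2]
  · have eA : A ^ s = A ^ (s - 1/2) * A ^ ((1:ℝ)/2) := by
      rw [← Real.rpow_add hA]; ring_nf
    have e2 : A ^ (s - 1/2) ≤ (6:ℝ) ^ (s - 1/2) * B2 ^ (s - 1/2) := by
      calc A ^ (s - 1/2) ≤ (6 * B2) ^ (s - 1/2) :=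
            Real.rpow_le_rpow hA.le hA6 hs'
        _ = (6:ℝ) ^ (s - 1/2) * B2 ^ (s - 1/2) :=
            Real.mul_rpow (by norm_num) hB2.le
    have e3 : ((1:ℝ)/8 * (A * B2)) ^ ((1:ℝ)/2) ≤ P ^ ((1:ℝ)/2) :=
      Real.rpow_le_rpow (by positivity) (by linarith) (by norm_num)
    have e4 : ((1:ℝ)/8 * (A * B2)) ^ ((1:ℝ)/2)
        = ((1:ℝ)/8) ^ ((1:ℝ)/2) * (A ^ ((1:ℝ)/2) * B2 ^ ((1:ℝ)/2)) := by
      rw [Real.mul_rpow (by norm_num) (by positivity), Real.mul_rpow hA.le hB2.le]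
    have e5 : (1/3:ℝ) ≤ ((1:ℝ)/8) ^ ((1:ℝ)/2) := by
      apply le_on_sq (by norm_num) (Real.rpow_nonneg (by norm_num) _)
      have hq : (((1:ℝ)/8) ^ ((1:ℝ)/2)) ^ 2 = 1/8 := by
        rw [← Real.rpow_natCast (((1:ℝ)/8) ^ ((1:ℝ)/2)) 2, ← Real.rpow_mul (by norm_num)]
        norm_num
      rw [hq]; norm_num
    have e6 : ((1:ℝ)/4) ^ s * B2 ^ s ≤ B1 ^ s := by
      rw [← Real.mul_rpow (by norm_num) hB2.le]
      exact Real.rpow_le_rpow (by positivity) h1 (by linarith)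
    have e7 : (24:ℝ) ^ s * ((1:ℝ)/4) ^ s = (6:ℝ) ^ s := by
      rw [← Real.mul_rpow (by norm_num) (by norm_num)]; norm_num
    have e8 : (6:ℝ) ^ (s - 1/2) ≤ (6:ℝ) ^ s :=
      Real.rpow_le_rpow_of_exponent_le (by norm_num) (by linarith)
    have e9 : B2 * B2 ^ (s - 1/2) = B2 ^ s * B2 ^ ((1:ℝ)/2) := by
      calc B2 * B2 ^ (s - 1/2) = B2 ^ (1:ℝ) * B2 ^ (s - 1/2) := by rw [Real.rpow_one]
        _ = B2 ^ ((1:ℝ) + (s - 1/2)) := (Real.rpow_add hB2 _ _).symm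
        _ = B2 ^ (s + 1/2) := by rw [show (1:ℝ) + (s - 1/2) = s + 1/2 by ring]
        _ = B2 ^ s * B2 ^ ((1:ℝ)/2) := Real.rpow_add hB2 _ _
    have hR1 : ((1:ℝ)/8) ^ ((1:ℝ)/2) * (A ^ ((1:ℝ)/2) * B2 ^ ((1:ℝ)/2))
          * (((1:ℝ)/4) ^ s * B2 ^ s) ≤ P ^ ((1:ℝ)/2) * B1 ^ s := by
      apply mul_le_mul _ e6 _ hPh.le
      · rw [← e4]; exact e3
      · exact mul_nonneg (Real.rpow_nonneg (by norm_num) _) hB2s.le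
    have hR2 : (1/3:ℝ) * (A ^ ((1:ℝ)/2) * B2 ^ ((1:ℝ)/2)) * (((1:ℝ)/4) ^ s * B2 ^ s)
        ≤ ((1:ℝ)/8) ^ ((1:ℝ)/2) * (A ^ ((1:ℝ)/2) * B2 ^ ((1:ℝ)/2))
          * (((1:ℝ)/4) ^ s * B2 ^ s) := by
      apply mul_le_mul_of_nonneg_right (mul_le_mul_of_nonneg_right e5 _) _
      · exact mul_nonneg hAh.le hB2h.le
      · exact mul_nonneg (Real.rpow_nonneg (by norm_num) _) hB2s.le
    have h6s : (0:ℝ) < (6:ℝ) ^ s := Real.rpow_pos_of_pos (by norm_num) _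
    have key : m * A ^ s ≤ 12 * (24:ℝ) ^ s * (P ^ ((1:ℝ)/2) * B1 ^ s) := by
      calc m * A ^ s = m * (A ^ (s - 1/2) * A ^ ((1:ℝ)/2)) := by rw [eA]
        _ ≤ B2 * (((6:ℝ) ^ (s - 1/2) * B2 ^ (s - 1/2)) * A ^ ((1:ℝ)/2)) := by
            refine mul_le_mul hm (mul_le_mul_of_nonneg_right e2 hAh.le) ?_ hB2.le
            exact mul_nonneg (Real.rpow_nonneg hA.le _) hAh.le
        _ = (6:ℝ) ^ (s - 1/2) * (B2 * B2 ^ (s - 1/2)) * A ^ ((1:ℝ)/2) := by ring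
        _ = (6:ℝ) ^ (s - 1/2) * (B2 ^ s * B2 ^ ((1:ℝ)/2)) * A ^ ((1:ℝ)/2) := by rw [e9]
        _ ≤ (6:ℝ) ^ s * (B2 ^ s * B2 ^ ((1:ℝ)/2)) * A ^ ((1:ℝ)/2) := by
            apply mul_le_mul_of_nonneg_right (mul_le_mul_of_nonneg_right e8 _) hAh.le
            exact mul_nonneg hB2s.le hB2h.le
        _ ≤ 4 * ((6:ℝ) ^ s * (B2 ^ s * B2 ^ ((1:ℝ)/2)) * A ^ ((1:ℝ)/2)) := by
            nlinarith [mul_pos (mul_pos h6s (mul_pos hB2s hB2h)) hAh]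
        _ = 4 * ((24:ℝ) ^ s * ((1:ℝ)/4) ^ s) * (B2 ^ s * B2 ^ ((1:ℝ)/2) * A ^ ((1:ℝ)/2)) := by
            rw [e7]; ring
        _ = 12 * (24:ℝ) ^ s
            * ((1/3:ℝ) * (A ^ ((1:ℝ)/2) * B2 ^ ((1:ℝ)/2)) * (((1:ℝ)/4) ^ s * B2 ^ s)) := by
            ring
        _ ≤ 12 * (24:ℝ) ^ s * (P ^ ((1:ℝ)/2) * B1 ^ s) :=
            mul_le_mul_of_nonneg_left (le_trans hR2 hR1) (by positivity)
    rw [Real.rpow_neg hB2.le, Real.rpow_neg hB3.le]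
    rw [div_mul_div_comm, div_le_iff₀ (mul_pos hPh (mul_pos (mul_pos hB1s hB2s) hB3s))]
    have hfin : 12 * (24:ℝ) ^ s * ((B2 ^ s)⁻¹ * (B3 ^ s)⁻¹)
        * (P ^ ((1:ℝ)/2) * (B1 ^ s * B2 ^ s * B3 ^ s))
        = 12 * (24:ℝ) ^ s * (P ^ ((1:ℝ)/2) * B1 ^ s) := by
      field_simp
    rw [hfin]
    exact key

/-- High-high interaction with one low frequency: for `s ≥ 1/2`, in the regime
`|ξ₁| ∼ |ξ₂| ≫ |ξ₃|`, `|ξ| ≫ |ξ₃|` on `ξ = ξ₁ - ξ₂ + ξ₃`, one has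
`⟨Φ(ξ̄)⟩ ∼ ⟨ξ⟩⟨ξ₂⟩` with `Φ(ξ̄) = 2(ξ-ξ₁)(ξ-ξ₃)`, and the multiplier
`m(ξ̄) = (|ξ₂|/⟨Φ⟩^{1/2}) ⟨ξ⟩^s/(⟨ξ₁⟩^s⟨ξ₂⟩^s⟨ξ₃⟩^s)` satisfies
`m(ξ̄) ≲ ⟨ξ₂⟩^{-s} ⟨ξ₃⟩^{-s}`. -/
theorem multiplier_bound_highhigh (s : ℝ) (hs : 1 / 2 ≤ s) :
    ∃ c C : ℝ, 0 < c ∧ c < 1 ∧ 0 < C ∧ ∀ ξ₁ ξ₂ ξ₃ : ℝ,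
      c * jb ξ₂ ≤ jb ξ₁ → jb ξ₁ ≤ jb ξ₂ / c →
      jb ξ₃ ≤ c * jb (ξ₁ - ξ₂ + ξ₃) → jb ξ₃ ≤ c * jb ξ₂ →
      (C⁻¹ * (jb (ξ₁ - ξ₂ + ξ₃) * jb ξ₂) ≤
          jb (2 * ((ξ₁ - ξ₂ + ξ₃) - ξ₁) * ((ξ₁ - ξ₂ + ξ₃) - ξ₃)) ∧
        jb (2 * ((ξ₁ - ξ₂ + ξ₃) - ξ₁) * ((ξ₁ - ξ₂ + ξ₃) - ξ₃)) ≤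
          C * (jb (ξ₁ - ξ₂ + ξ₃) * jb ξ₂)) ∧
      |ξ₂| / jb (2 * ((ξ₁ - ξ₂ + ξ₃) - ξ₁) * ((ξ₁ - ξ₂ + ξ₃) - ξ₃)) ^ ((1 : ℝ) / 2) *
          (jb (ξ₁ - ξ₂ + ξ₃) ^ s / (jb ξ₁ ^ s * jb ξ₂ ^ s * jb ξ₃ ^ s)) ≤
        C * (jb ξ₂ ^ (-s) * jb ξ₃ ^ (-s)) := by
  have hCpos : (0:ℝ) < 12 * (24:ℝ) ^ s := by positivity
  refine ⟨1/4, 12 * (24:ℝ) ^ s, by norm_num, by norm_num, hCpos, ?_⟩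
  intro ξ₁ ξ₂ ξ₃ h1 h2 h3 h4
  have hB3_1 : (1:ℝ) ≤ jb ξ₃ := one_le_jb ξ₃
  have hB2_4 : (4:ℝ) ≤ jb ξ₂ := by linarith
  have hA_4 : (4:ℝ) ≤ jb (ξ₁ - ξ₂ + ξ₃) := by linarith
  have hB1_le : jb ξ₁ ≤ 4 * jb ξ₂ := by
    rw [show (4 : ℝ) * jb ξ₂ = jb ξ₂ / (1/4) by ring]; exact h2
  have habs2 : jb ξ₂ / 2 ≤ |ξ₂| := half_jb_le_abs (by linarith)
  have habsξ : jb (ξ₁ - ξ₂ + ξ₃) / 2 ≤ |ξ₁ - ξ₂ + ξ₃| := half_jb_le_abs (by linarith)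
  have habs3 : |ξ₃| ≤ jb ξ₃ := abs_le_jb ξ₃
  have e1 : (ξ₁ - ξ₂ + ξ₃) - ξ₁ = ξ₃ - ξ₂ := by ring
  have f1 : jb ξ₂ / 4 ≤ |(ξ₁ - ξ₂ + ξ₃) - ξ₁| := by
    rw [e1]
    have h' : |ξ₂| - |ξ₃| ≤ |ξ₃ - ξ₂| := by
      rw [abs_sub_comm]; exact abs_sub_abs_le_abs_sub ξ₂ ξ₃
    linarith
  have f2 : jb (ξ₁ - ξ₂ + ξ₃) / 4 ≤ |(ξ₁ - ξ₂ + ξ₃) - ξ₃| := by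
    have h' : |ξ₁ - ξ₂ + ξ₃| - |ξ₃| ≤ |(ξ₁ - ξ₂ + ξ₃) - ξ₃| :=
      abs_sub_abs_le_abs_sub (ξ₁ - ξ₂ + ξ₃) ξ₃
    linarith
  have hPl : jb (ξ₁ - ξ₂ + ξ₃) * jb ξ₂ / 8 ≤
      jb (2 * ((ξ₁ - ξ₂ + ξ₃) - ξ₁) * ((ξ₁ - ξ₂ + ξ₃) - ξ₃)) := by
    have habsmul : |2 * ((ξ₁ - ξ₂ + ξ₃) - ξ₁) * ((ξ₁ - ξ₂ + ξ₃) - ξ₃)|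
        = 2 * |(ξ₁ - ξ₂ + ξ₃) - ξ₁| * |(ξ₁ - ξ₂ + ξ₃) - ξ₃| := by
      rw [abs_mul, abs_mul, abs_two]
    have hmm : (jb ξ₂ / 4) * (jb (ξ₁ - ξ₂ + ξ₃) / 4) ≤
        |(ξ₁ - ξ₂ + ξ₃) - ξ₁| * |(ξ₁ - ξ₂ + ξ₃) - ξ₃| :=
      mul_le_mul f1 f2 (by linarith) (abs_nonneg _)
    calc jb (ξ₁ - ξ₂ + ξ₃) * jb ξ₂ / 8
        = 2 * ((jb ξ₂ / 4) * (jb (ξ₁ - ξ₂ + ξ₃) / 4)) := by ring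
      _ ≤ 2 * (|(ξ₁ - ξ₂ + ξ₃) - ξ₁| * |(ξ₁ - ξ₂ + ξ₃) - ξ₃|) := by linarith
      _ = |2 * ((ξ₁ - ξ₂ + ξ₃) - ξ₁) * ((ξ₁ - ξ₂ + ξ₃) - ξ₃)| := by rw [habsmul]; ring
      _ ≤ _ := abs_le_jb _
  have u1 : jb ((ξ₁ - ξ₂ + ξ₃) - ξ₁) ≤ 2 * jb ξ₂ := by
    rw [e1]; exact le_trans (jb_sub_le ξ₃ ξ₂) (by linarith)
  have u2 : jb ((ξ₁ - ξ₂ + ξ₃) - ξ₃) ≤ 2 * jb (ξ₁ - ξ₂ + ξ₃) :=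
    le_trans (jb_sub_le (ξ₁ - ξ₂ + ξ₃) ξ₃) (by linarith)
  have hPu : jb (2 * ((ξ₁ - ξ₂ + ξ₃) - ξ₁) * ((ξ₁ - ξ₂ + ξ₃) - ξ₃)) ≤
      12 * (jb (ξ₁ - ξ₂ + ξ₃) * jb ξ₂) := by
    have t := jb_two_mul_le ((ξ₁ - ξ₂ + ξ₃) - ξ₁) ((ξ₁ - ξ₂ + ξ₃) - ξ₃)
    have hmm : jb ((ξ₁ - ξ₂ + ξ₃) - ξ₁) * jb ((ξ₁ - ξ₂ + ξ₃) - ξ₃)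
        ≤ (2 * jb ξ₂) * (2 * jb (ξ₁ - ξ₂ + ξ₃)) :=
      mul_le_mul u1 u2 (jb_nonneg _) (by linarith)
    nlinarith [jb_nonneg ((ξ₁ - ξ₂ + ξ₃) - ξ₁), jb_nonneg ((ξ₁ - ξ₂ + ξ₃) - ξ₃)]
  have hA6 : jb (ξ₁ - ξ₂ + ξ₃) ≤ 6 * jb ξ₂ := by
    have t1 := jb_triangle (ξ₁ - ξ₂) ξ₃
    have t2 : jb (ξ₁ - ξ₂) ≤ jb ξ₁ + jb ξ₂ := jb_sub_le ξ₁ ξ₂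
    linarith
  exact mult_aux s |ξ₂| (jb (ξ₁ - ξ₂ + ξ₃)) (jb ξ₁) (jb ξ₂) (jb ξ₃)
    (jb (2 * ((ξ₁ - ξ₂ + ξ₃) - ξ₁) * ((ξ₁ - ξ₂ + ξ₃) - ξ₃))) hs
    (jb_pos _) (jb_pos _) (jb_pos _) (jb_pos _) (jb_pos _)
    (abs_le_jb ξ₂) h1 hA6 hPl hPu
end

section
/- Let 1/2 < s < 3/4, and restrict to the region |ξ₂ - ξ₁| > 1, |ξ₂ - ξ₃| > 1, |ξ₁| ∼ |ξ₂| ≫ |ξ|, |ξ₃| on the hyperplane ξ = ξ₁ - ξ₂ + ξ₃, so that ⟨Φ(ξ̄)⟩ ∼ ⟨ξ₁⟩⟨ξ - ξ₃⟩. Then the multiplier m₁(ξ̄) = (|ξ₂|/⟨Φ(ξ̄)⟩) · ⟨ξ₁⟩^{1-s} / (⟨ξ⟩^{1-s} ⟨ξ₂⟩^s ⟨ξ₃⟩^s) satisfies, on |Φ(ξ̄)| > M with M ≥ 1: m₁(ξ̄) ≤ C M^{-(2s-1)} ⟨ξ-ξ₃⟩^{-(2-2s)} ⟨ξ₃⟩^{-s}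 ⟨ξ⟩^{-(1-s)}. -/
lemma jb_eq_sqrt (x : ℝ) : jb x = Real.sqrt (1 + x ^ 2) := by
  rw [jb, Real.sqrt_eq_rpow]

lemma jb_le_one_add_abs (x : ℝ) : jb x ≤ 1 + |x| := by
  rw [jb_eq_sqrt]
  have h : 1 + x ^ 2 ≤ (1 + |x|) ^ 2 := by nlinarith [abs_nonneg x, sq_abs x]
  calc Real.sqrt (1 + x ^ 2) ≤ Real.sqrt ((1 + |x|) ^ 2) := Real.sqrt_le_sqrt h
    _ = 1 + |x| := Real.sqrt_sq (by positivity)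

lemma jb_add_le (a b : ℝ) : jb (a + b) ≤ jb a + jb b := by
  rw [jb_eq_sqrt, jb_eq_sqrt, jb_eq_sqrt]
  set u := Real.sqrt (1 + a ^ 2) with hu'
  set v := Real.sqrt (1 + b ^ 2) with hv'
  have hu : u ^ 2 = 1 + a ^ 2 := Real.sq_sqrt (by positivity)
  have hv : v ^ 2 = 1 + b ^ 2 := Real.sq_sqrt (by positivity)
  have hu0 : 0 ≤ u := Real.sqrt_nonneg _
  have hv0 : 0 ≤ v := Real.sqrt_nonneg _
  have huv : a * b ≤ u * v := by
    nlinarith [sq_nonneg (u*v - a*b), sq_nonneg (u*v + a*b), mul_nonneg hu0 hv0]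
  have h : 1 + (a + b) ^ 2 ≤ (u + v) ^ 2 := by nlinarith
  calc Real.sqrt (1 + (a + b) ^ 2) ≤ Real.sqrt ((u + v) ^ 2) := Real.sqrt_le_sqrt h
    _ = u + v := Real.sqrt_sq (by positivity)

set_option maxHeartbeats 1000000 in
/-- Pointwise multiplier bound in Subcase 3.a of the weak-norm estimate:
for `1/2 < s < 3/4`, in the region `|ξ₂-ξ₁| > 1`, `|ξ₂-ξ₃| > 1`,
`|ξ₁| ∼ |ξ₂| ≫ |ξ|, |ξ₃|` (with `ξ = ξ₁-ξ₂+ξ₃`), and on `|Φ(ξ̄)| > M`, `M ≥ 1`,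
the multiplier `m₁(ξ̄) = (|ξ₂|/⟨Φ⟩)·⟨ξ₁⟩^{1-s}/(⟨ξ⟩^{1-s}⟨ξ₂⟩^s⟨ξ₃⟩^s)`
satisfies `m₁(ξ̄) ≤ C M^{-(2s-1)} ⟨ξ-ξ₃⟩^{-(2-2s)} ⟨ξ₃⟩^{-s} ⟨ξ⟩^{-(1-s)}`,
where `Φ(ξ̄) = 2(ξ-ξ₁)(ξ-ξ₃)`. -/
theorem multiplier_bound_subcase3a (s : ℝ) (hs : 1 / 2 < s) (hs' : s < 3 / 4) :
    ∃ c C : ℝ, 0 < c ∧ c < 1 ∧ 0 < C ∧ ∀ M : ℝ, 1 ≤ M → ∀ ξ₁ ξ₂ ξ₃ : ℝ,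
      1 < |ξ₂ - ξ₁| → 1 < |ξ₂ - ξ₃| →
      c * jb ξ₂ ≤ jb ξ₁ → jb ξ₁ ≤ jb ξ₂ / c →
      jb (ξ₁ - ξ₂ + ξ₃) ≤ c * jb ξ₁ → jb ξ₃ ≤ c * jb ξ₁ →
      M < |2 * ((ξ₁ - ξ₂ + ξ₃) - ξ₁) * ((ξ₁ - ξ₂ + ξ₃) - ξ₃)| →
      |ξ₂| / jb (2 * ((ξ₁ - ξ₂ + ξ₃) - ξ₁) * ((ξ₁ - ξ₂ + ξ₃) - ξ₃)) *
          (jb ξ₁ ^ (1 - s) /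
            (jb (ξ₁ - ξ₂ + ξ₃) ^ (1 - s) * jb ξ₂ ^ s * jb ξ₃ ^ s)) ≤
        C * M ^ (-(2 * s - 1)) * jb ((ξ₁ - ξ₂ + ξ₃) - ξ₃) ^ (-(2 - 2 * s)) *
          jb ξ₃ ^ (-s) * jb (ξ₁ - ξ₂ + ξ₃) ^ (-(1 - s)) := by
  refine ⟨1/8, 3, by norm_num, by norm_num, by norm_num, ?_⟩
  intro M hM ξ₁ ξ₂ ξ₃ h21 h23 _hc1 _hc2 hx h3 hPhi
  set ξ : ℝ := ξ₁ - ξ₂ + ξ₃ with hξdef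
  set Φ : ℝ := 2 * (ξ - ξ₁) * (ξ - ξ₃) with hΦdef
  have hMpos : (0:ℝ) < M := lt_of_lt_of_le one_pos hM
  have hb1 : jb ξ₁ ≤ 4/3 * jb ξ₂ := by
    have e1 : ξ₁ = (ξ₂ + -ξ₃) + ξ := by rw [hξdef]; ring
    have h1 : jb ξ₁ ≤ jb (ξ₂ + -ξ₃) + jb ξ := by rw [e1]; exact jb_add_le _ _
    have h2 : jb (ξ₂ + -ξ₃) ≤ jb ξ₂ + jb ξ₃ := by
      have := jb_add_le ξ₂ (-ξ₃); rwa [jb_neg] at this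
    linarith
  have h3B : jb ξ₃ ≤ 1/6 * jb ξ₂ := by linarith
  have hB1big : (8:ℝ) ≤ jb ξ₁ := by linarith [one_le_jb ξ₃]
  have hB2big : (6:ℝ) ≤ jb ξ₂ := by linarith
  have habs2 : 5/6 * jb ξ₂ ≤ |ξ₂| := by linarith [jb_le_one_add_abs ξ₂]
  have hE : 1/2 * jb ξ₂ ≤ |ξ₂ - ξ₃| := by
    have h1 := abs_sub_abs_le_abs_sub ξ₂ ξ₃
    have h2 := abs_le_jb ξ₃
    linarith
  have hΦeq : Φ = 2 * (ξ₂ - ξ₃) * (ξ₂ - ξ₁) := by rw [hΦdef, hξdef]; ring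
  have hΦabs : |Φ| = 2 * |ξ₂ - ξ₃| * |ξ₂ - ξ₁| := by
    rw [hΦeq, abs_mul, abs_mul, abs_two]
  have hD : ξ - ξ₃ = ξ₁ - ξ₂ := by rw [hξdef]; ring
  have hDpos : (0:ℝ) < |ξ₂ - ξ₁| := lt_trans one_pos h21
  have hFM : M ≤ jb Φ := le_trans (le_of_lt hPhi) (abs_le_jb Φ)
  have e2 : (0:ℝ) < 2 - 2*s := by linarith
  have e3 : (0:ℝ) < 1 - s := by linarith
  -- key lower bound on jb Φ
  have hFge : M ^ (2*s-1) * (|ξ₂ - ξ₁| * jb ξ₂) ^ (2 - 2*s) ≤ jb Φ := by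
    have hsplit : jb Φ = jb Φ ^ (2*s-1) * jb Φ ^ (2-2*s) := by
      rw [← Real.rpow_add (jb_pos Φ), show (2*s-1)+(2-2*s) = 1 by ring, Real.rpow_one]
    have hA : M ^ (2*s-1) ≤ jb Φ ^ (2*s-1) :=
      Real.rpow_le_rpow (le_of_lt hMpos) hFM (by linarith)
    have hDB : |ξ₂ - ξ₁| * jb ξ₂ ≤ jb Φ := by
      have h1 : |ξ₂ - ξ₁| * jb ξ₂ ≤ |Φ| := by
        rw [hΦabs]
        nlinarith [abs_nonneg (ξ₂ - ξ₁), jb_pos ξ₂]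
      linarith [abs_le_jb Φ]
    have hB : (|ξ₂ - ξ₁| * jb ξ₂) ^ (2-2*s) ≤ jb Φ ^ (2-2*s) :=
      Real.rpow_le_rpow (mul_nonneg (abs_nonneg _) (jb_pos ξ₂).le) hDB (by linarith)
    calc M ^ (2*s-1) * (|ξ₂ - ξ₁| * jb ξ₂) ^ (2-2*s)
        ≤ jb Φ ^ (2*s-1) * jb Φ ^ (2-2*s) :=
          mul_le_mul hA hB
            (Real.rpow_nonneg (mul_nonneg (abs_nonneg _) (jb_pos ξ₂).le) _)
            (Real.rpow_nonneg (jb_pos Φ).le _)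
      _ = jb Φ := hsplit.symm
  -- bound on jb (ξ - ξ₃) ^ (2-2s)
  have hPle : jb (ξ - ξ₃) ^ (2-2*s) ≤ 2 * |ξ₂ - ξ₁| ^ (2-2*s) := by
    have habsD : |ξ - ξ₃| = |ξ₂ - ξ₁| := by rw [hD, abs_sub_comm]
    have h1 : jb (ξ - ξ₃) ≤ 2 * |ξ₂ - ξ₁| := by
      have h2 := jb_le_one_add_abs (ξ - ξ₃)
      rw [habsD] at h2; linarith
    have hp : 0 < |ξ₂ - ξ₁| ^ (2-2*s) := Real.rpow_pos_of_pos hDpos _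
    calc jb (ξ - ξ₃) ^ (2-2*s) ≤ (2 * |ξ₂ - ξ₁|) ^ (2-2*s) :=
          Real.rpow_le_rpow (le_of_lt (jb_pos _)) h1 (le_of_lt e2)
      _ = 2 ^ (2-2*s) * |ξ₂ - ξ₁| ^ (2-2*s) := Real.mul_rpow (by norm_num) (abs_nonneg _)
      _ ≤ 2 * |ξ₂ - ξ₁| ^ (2-2*s) := by
          have h3' : (2:ℝ) ^ (2-2*s) ≤ 2 ^ (1:ℝ) :=
            Real.rpow_le_rpow_of_exponent_le (by norm_num) (by linarith)
          rw [Real.rpow_one] at h3'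
          exact mul_le_mul_of_nonneg_right h3' (le_of_lt hp)
  -- bound on the numerator
  have hNle : |ξ₂| * jb ξ₁ ^ (1-s) ≤ 4/3 * jb ξ₂ ^ (2-s) := by
    have h1 : jb ξ₁ ^ (1-s) ≤ (4/3 * jb ξ₂) ^ (1-s) :=
      Real.rpow_le_rpow (le_of_lt (jb_pos _)) hb1 (le_of_lt e3)
    have h2 : (4/3 * jb ξ₂) ^ (1-s) = (4/3:ℝ) ^ (1-s) * jb ξ₂ ^ (1-s) :=
      Real.mul_rpow (by norm_num) (le_of_lt (jb_pos _))
    have h3' : (4/3:ℝ) ^ (1-s) ≤ 4/3 := by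
      have := Real.rpow_le_rpow_of_exponent_le (show (1:ℝ) ≤ 4/3 by norm_num)
        (show 1-s ≤ (1:ℝ) by linarith)
      rwa [Real.rpow_one] at this
    have h4 : jb ξ₂ * jb ξ₂ ^ (1-s) = jb ξ₂ ^ (2-s) := by
      nth_rewrite 1 [← Real.rpow_one (jb ξ₂)]
      rw [← Real.rpow_add (jb_pos ξ₂), show (1:ℝ)+(1-s) = 2-s by ring]
    have hp1 : 0 ≤ jb ξ₂ ^ (1-s) := le_of_lt (Real.rpow_pos_of_pos (jb_pos _) _)
    calc |ξ₂| * jb ξ₁ ^ (1-s) ≤ jb ξ₂ * ((4/3:ℝ) ^ (1-s) * jb ξ₂ ^ (1-s)) := by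
          rw [← h2]
          exact mul_le_mul (abs_le_jb ξ₂) h1 (Real.rpow_nonneg (jb_pos ξ₁).le _)
            (jb_pos ξ₂).le
      _ ≤ jb ξ₂ * (4/3 * jb ξ₂ ^ (1-s)) := by
          apply mul_le_mul_of_nonneg_left _ (le_of_lt (jb_pos ξ₂))
          exact mul_le_mul_of_nonneg_right h3' hp1
      _ = 4/3 * (jb ξ₂ * jb ξ₂ ^ (1-s)) := by ring
      _ = 4/3 * jb ξ₂ ^ (2-s) := by rw [h4]
  -- the key product inequality
  have hK : |ξ₂| * jb ξ₁ ^ (1-s) * (M ^ (2*s-1) * jb (ξ - ξ₃) ^ (2-2*s)) ≤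
      3 * (jb Φ * jb ξ₂ ^ s) := by
    have hT2 : jb ξ₂ ^ (2-2*s) * jb ξ₂ ^ s = jb ξ₂ ^ (2-s) := by
      rw [← Real.rpow_add (jb_pos ξ₂), show (2-2*s)+s = 2-s by ring]
    have hMp : 0 < M ^ (2*s-1) := Real.rpow_pos_of_pos hMpos _
    have hDp : 0 < |ξ₂ - ξ₁| ^ (2-2*s) := Real.rpow_pos_of_pos hDpos _
    have hB2p : 0 < jb ξ₂ ^ (2-s) := Real.rpow_pos_of_pos (jb_pos _) _
    have hB2sp : 0 < jb ξ₂ ^ s := Real.rpow_pos_of_pos (jb_pos _) _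
    have hRHS : M ^ (2*s-1) * |ξ₂ - ξ₁| ^ (2-2*s) * jb ξ₂ ^ (2-s) ≤ jb Φ * jb ξ₂ ^ s := by
      have heq : M ^ (2*s-1) * |ξ₂ - ξ₁| ^ (2-2*s) * jb ξ₂ ^ (2-s) =
          (M ^ (2*s-1) * (|ξ₂ - ξ₁| * jb ξ₂) ^ (2-2*s)) * jb ξ₂ ^ s := by
        rw [Real.mul_rpow (abs_nonneg _) (le_of_lt (jb_pos _)), ← hT2]; ring
      rw [heq]
      exact mul_le_mul_of_nonneg_right hFge (le_of_lt hB2sp)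
    have hPp : 0 ≤ jb (ξ - ξ₃) ^ (2-2*s) := Real.rpow_nonneg (jb_pos _).le _
    have hLHS : |ξ₂| * jb ξ₁ ^ (1-s) * (M ^ (2*s-1) * jb (ξ - ξ₃) ^ (2-2*s)) ≤
        8/3 * (M ^ (2*s-1) * |ξ₂ - ξ₁| ^ (2-2*s) * jb ξ₂ ^ (2-s)) := by
      have hm : M ^ (2*s-1) * jb (ξ - ξ₃) ^ (2-2*s) ≤
          M ^ (2*s-1) * (2 * |ξ₂ - ξ₁| ^ (2-2*s)) :=
        mul_le_mul_of_nonneg_left hPle (le_of_lt hMp)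
      calc |ξ₂| * jb ξ₁ ^ (1-s) * (M ^ (2*s-1) * jb (ξ - ξ₃) ^ (2-2*s))
          ≤ (4/3 * jb ξ₂ ^ (2-s)) * (M ^ (2*s-1) * (2 * |ξ₂ - ξ₁| ^ (2-2*s))) := by
            apply mul_le_mul hNle hm (mul_nonneg hMp.le hPp)
              (mul_nonneg (by norm_num) hB2p.le)
        _ = 8/3 * (M ^ (2*s-1) * |ξ₂ - ξ₁| ^ (2-2*s) * jb ξ₂ ^ (2-s)) := by ring
    nlinarith [mul_pos (mul_pos hMp hDp) hB2p]
  -- finish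
  rw [Real.rpow_neg (le_of_lt hMpos), Real.rpow_neg (le_of_lt (jb_pos (ξ - ξ₃))),
    Real.rpow_neg (le_of_lt (jb_pos ξ₃)), Real.rpow_neg (le_of_lt (jb_pos ξ))]
  have hFp : 0 < jb Φ := jb_pos Φ
  have hB2sp : 0 < jb ξ₂ ^ s := Real.rpow_pos_of_pos (jb_pos _) _
  have hMp : 0 < M ^ (2*s-1) := Real.rpow_pos_of_pos hMpos _
  have hPp : 0 < jb (ξ - ξ₃) ^ (2-2*s) := Real.rpow_pos_of_pos (jb_pos _) _
  have h3p : 0 < jb ξ₃ ^ s := Real.rpow_pos_of_pos (jb_pos _) _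
  have hxp : 0 < jb ξ ^ (1-s) := Real.rpow_pos_of_pos (jb_pos _) _
  have key : |ξ₂| * jb ξ₁ ^ (1-s) / (jb Φ * jb ξ₂ ^ s) ≤
      3 / (M ^ (2*s-1) * jb (ξ - ξ₃) ^ (2-2*s)) := by
    rw [div_le_div_iff₀ (mul_pos hFp hB2sp) (mul_pos hMp hPp)]
    calc |ξ₂| * jb ξ₁ ^ (1-s) * (M ^ (2*s-1) * jb (ξ - ξ₃) ^ (2-2*s)) ≤
        3 * (jb Φ * jb ξ₂ ^ s) := hK
      _ = 3 * (jb Φ * jb ξ₂ ^ s) := rfl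
  have hgoalL : |ξ₂| / jb Φ * (jb ξ₁ ^ (1-s) / (jb ξ ^ (1-s) * jb ξ₂ ^ s * jb ξ₃ ^ s)) =
      (|ξ₂| * jb ξ₁ ^ (1-s) / (jb Φ * jb ξ₂ ^ s)) * ((jb ξ₃ ^ s)⁻¹ * (jb ξ ^ (1-s))⁻¹) := by
    field_simp [hFp.ne', hB2sp.ne', h3p.ne', hxp.ne']
    try ring
    try tauto
  have hgoalR : 3 * (M ^ (2*s-1))⁻¹ * (jb (ξ - ξ₃) ^ (2-2*s))⁻¹ * (jb ξ₃ ^ s)⁻¹ *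
      (jb ξ ^ (1-s))⁻¹ =
      (3 / (M ^ (2*s-1) * jb (ξ - ξ₃) ^ (2-2*s))) * ((jb ξ₃ ^ s)⁻¹ * (jb ξ ^ (1-s))⁻¹) := by
    field_simp [hMp.ne', hPp.ne', h3p.ne', hxp.ne']
    try ring
    try tauto
  rw [hgoalL, hgoalR]
  exact mul_le_mul_of_nonneg_right key
    (mul_nonneg (inv_nonneg.2 h3p.le) (inv_nonneg.2 hxp.le))
end
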